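/- arXiv:1902.06200 — 11 statements merged into one kernel-verified Lean document; each statement's English description precedes it below -/
import Mathlib

section
/- Let X be a topological space with a base 𝓑 of regularly open sets and ξ : X × 𝓑 → [0,1] a π-capacity. Define ρ_ξ(x,C) = 0 if x ∈ C, and ρ_ξ(x,C) = sup{ξ(x,U) : U ∈ 𝓑, U ∩ C = ∅} otherwise, for regularly closed C. Then ρ_ξ satisfies condition K1*: for every proper regularly closed C ⊆ X there is a dense open subset V of X \ C such that ρ_ξ(x,C) > 0 for all x ∈ V. -/
/-- A set is regularly closed if it equals the closure of its interior. -/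
def RegClosed {X : Type*} [TopologicalSpace X] (C : Set X) : Prop :=
  C = closure (interior C)

/-- A set is regularly open if it equals the interior of its closure. -/
def RegOpen {X : Type*} [TopologicalSpace X] (U : Set X) : Prop :=
  U = interior (closure U)

theorem stmt2 {X : Type*} [TopologicalSpace X] (𝓑 : Set (Set X))
    (hbase : TopologicalSpace.IsTopologicalBasis 𝓑)
    (hreg : ∀ U ∈ 𝓑, RegOpen U)
    (ξ : X → Set X → ℝ)
    (hrange : ∀ x, ∀ U ∈ 𝓑, 0 ≤ ξ x U ∧ ξ x U ≤ 1)
    (hE1 : ∀ x, ∀ U ∈ 𝓑, x ∉ U → ξ x U = 0)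
    (hE2 : ∀ U ∈ 𝓑, U ⊆ closure {x ∈ U | 0 < ξ x U})
    (hE3 : ∀ U ∈ 𝓑, LowerSemicontinuous (fun x => ξ x U))
    (ρ : X → Set X → ℝ)
    (hρ0 : ∀ x (C : Set X), RegClosed C → x ∈ C → ρ x C = 0)
    (hρ1 : ∀ x (C : Set X), RegClosed C → x ∉ C →
      ρ x C = sSup {r : ℝ | ∃ U ∈ 𝓑, U ∩ C = ∅ ∧ r = ξ x U}) :
    ∀ C : Set X, RegClosed C → C ≠ Set.univ →
      ∃ V : Set X, IsOpen V ∧ V ⊆ Cᶜ ∧ Cᶜ ⊆ closure V ∧ ∀ x ∈ V, 0 < ρ x C := by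
  intro C hC hCne
  classical
  set V : Set X := ⋃ U ∈ {U ∈ 𝓑 | U ∩ C = ∅}, {x | 0 < ξ x U} with hV
  have hsubU : ∀ U ∈ 𝓑, {x | 0 < ξ x U} ⊆ U := by
    intro U hU x hx
    by_contra h
    have : (0:ℝ) < ξ x U := hx
    rw [hE1 x U hU h] at this; exact lt_irrefl 0 this
  have hVC : V ⊆ Cᶜ := by
    intro x hx
    simp only [hV, Set.mem_iUnion] at hx
    obtain ⟨U, ⟨hU, hUC⟩, hx⟩ := hx
    have : x ∈ U := hsubU U hU hx
    intro hxC
    exact absurd (Set.eq_empty_iff_forall_notMem.mp hUC x ⟨this, hxC⟩) (fun h => h)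
  refine ⟨V, ?_, hVC, ?_, ?_⟩
  · exact isOpen_biUnion fun U hU => (hE3 U hU.1).isOpen_preimage 0
  · -- density
    intro x hx
    rw [mem_closure_iff]
    intro W hW hxW
    have hopen : IsOpen (W ∩ Cᶜ) := hW.inter (by
      rw [isOpen_compl_iff, hC]; exact isClosed_closure)
    obtain ⟨U, hU, hxU, hUW⟩ := hbase.exists_subset_of_mem_open (Set.mem_inter hxW hx) hopen
    have hUC : U ∩ C = ∅ := by
      apply Set.eq_empty_iff_forall_notMem.mpr
      intro y ⟨hyU, hyC⟩
      exact (hUW hyU).2 hyC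
    have hxcl := hE2 U hU hxU
    rw [mem_closure_iff] at hxcl
    obtain ⟨y, hyW, hyU, hyξ⟩ := hxcl W hW hxW
    exact ⟨y, hyW, by
      simp only [hV, Set.mem_iUnion]; exact ⟨U, ⟨hU, hUC⟩, hyξ⟩⟩
  · intro x hx
    simp only [hV, Set.mem_iUnion] at hx
    obtain ⟨U, ⟨hU, hUC⟩, hx⟩ := hx
    have hxC : x ∉ C := hVC (by simp only [hV, Set.mem_iUnion]; exact ⟨U, ⟨hU, hUC⟩, hx⟩)
    rw [hρ1 x C hC hxC]
    have hmem : ξ x U ∈ {r : ℝ | ∃ U ∈ 𝓑, U ∩ C = ∅ ∧ r = ξ x U} := ⟨U, hU, hUC, rfl⟩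
    have hbdd : BddAbove {r : ℝ | ∃ U ∈ 𝓑, U ∩ C = ∅ ∧ r = ξ x U} := by
      refine ⟨1, fun r hr => ?_⟩
      obtain ⟨U', hU', _, rfl⟩ := hr
      exact (hrange x U' hU').2
    exact lt_of_lt_of_le hx (le_csSup hbdd hmem)
end

section
/- Let ρ be a normed quasi κ-metric on a topological space X (so 0 ≤ ρ ≤ 1) and define ξ(x,U) = sup{ρ(x,C) : C regularly closed, C ∪ U = X} for regularly open U. Then for every regularly open U the set {x ∈ U : ξ(x,U) > 0} is dense in U. -/
/-- A quasi κ-metric on `X`: a nonnegative function of a point and a regularly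
closed set satisfying axioms K1*, K2, K3 and K4. -/
structure IsQuasiKappaMetric {X : Type*} [TopologicalSpace X] (ρ : X → Set X → ℝ) : Prop where
  nonneg : ∀ x C, RegClosed C → 0 ≤ ρ x C
  k1star : ∀ C : Set X, RegClosed C → ∃ V : Set X, IsOpen V ∧ V ⊆ Cᶜ ∧
    Cᶜ ⊆ closure V ∧ ∀ x, 0 < ρ x C ↔ x ∈ V
  k2 : ∀ x (C C' : Set X), RegClosed C → RegClosed C' → C ⊆ C' → ρ x C' ≤ ρ x C
  k3 : ∀ C : Set X, RegClosed C → Continuous (fun x => ρ x C)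
  k4 : ∀ S : Set (Set X), S.Nonempty → (∀ C ∈ S, RegClosed C) → IsChain (· ⊆ ·) S →
    ∀ x, ρ x (closure (⋃₀ S)) = sInf {r : ℝ | ∃ C ∈ S, r = ρ x C}

theorem stmt3 {X : Type*} [TopologicalSpace X] (ρ : X → Set X → ℝ)
    (hρ : IsQuasiKappaMetric ρ)
    (hnormed : ∀ x C, RegClosed C → ρ x C ≤ 1)
    (ξ : X → Set X → ℝ)
    (hξ : ∀ x (U : Set X), RegOpen U →
      ξ x U = sSup {r : ℝ | ∃ C : Set X, RegClosed C ∧ C ∪ U = Set.univ ∧ r = ρ x C}) :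
    ∀ U : Set X, RegOpen U → U ⊆ closure {x ∈ U | 0 < ξ x U} := by
  intro U hU
  have hC : RegClosed Uᶜ := by
    unfold RegClosed
    rw [interior_compl, closure_compl, ← hU]
  obtain ⟨V, hVopen, hVsub, hVdense, hVpos⟩ := hρ.k1star Uᶜ hC
  have hVU : V ⊆ {x ∈ U | 0 < ξ x U} := by
    intro x hx
    have hxU : x ∈ U := by simpa using hVsub hx
    refine ⟨hxU, ?_⟩
    rw [hξ x U hU]
    have hmem : ρ x Uᶜ ∈ {r : ℝ | ∃ C : Set X, RegClosed C ∧ C ∪ U = Set.univ ∧ r = ρ x C} :=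
      ⟨Uᶜ, hC, by simp, rfl⟩
    have hbdd : BddAbove {r : ℝ | ∃ C : Set X, RegClosed C ∧ C ∪ U = Set.univ ∧ r = ρ x C} := by
      refine ⟨1, ?_⟩
      rintro r ⟨C, hCr, _, rfl⟩
      exact hnormed x C hCr
    calc (0:ℝ) < ρ x Uᶜ := (hVpos x).mpr hx
      _ ≤ _ := le_csSup hbdd hmem
  calc U ⊆ closure V := by simpa using hVdense
    _ ⊆ closure {x ∈ U | 0 < ξ x U} := closure_mono hVU
end

section
/- Let ρ be a regular normed quasi κ-metric on X (satisfying in addition K5: ρ(x,C) ≤ ρ(x,C') + sup{ρ(y,C) : y ∈ C'} for all x and regularly closed C, C'). Define ξ(x,U) = ρ(x, X\U) for regularly open U. If ξ(x,U) > a > 0, then there exists a regularly open set U_a ⊆ U with ξ(x,U_a) ≥ a and ξ(y,U) ≥ ξ(x,U) − a for all y ∈ U_a. -/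
lemma regOpen_int_cl {X : Type*} [TopologicalSpace X] (s : Set X) :
    RegOpen (interior (closure s)) := by
  have h1 : closure (interior (closure s)) ⊆ closure s :=
    closure_minimal interior_subset isClosed_closure
  exact subset_antisymm isOpen_interior.subset_interior_closure (interior_mono h1)

lemma regClosed_compl {X : Type*} [TopologicalSpace X] {U : Set X} (h : RegOpen U) :
    RegClosed Uᶜ := by
  rw [RegClosed, interior_compl, closure_compl, ← h]

theorem stmt5 {X : Type*} [TopologicalSpace X] (ρ : X → Set X → ℝ)
    (hρ : IsQuasiKappaMetric ρ)
    (hnormed : ∀ x C, RegClosed C → ρ x C ≤ 1)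
    (hK5 : ∀ x (C C' : Set X), RegClosed C → RegClosed C' →
      ρ x C ≤ ρ x C' + sSup {r : ℝ | ∃ y ∈ C', r = ρ y C})
    (ξ : X → Set X → ℝ)
    (hξ : ∀ x (U : Set X), RegOpen U → ξ x U = ρ x Uᶜ) :
    ∀ (U : Set X), RegOpen U → ∀ (x : X) (a : ℝ), a < ξ x U → 0 < a →
      ∃ Ua : Set X, RegOpen Ua ∧ Ua ⊆ U ∧ a ≤ ξ x Ua ∧
        ∀ y ∈ Ua, ξ x U - a ≤ ξ y U := by
  intro U hU x a ha ha0
  have hC : RegClosed Uᶜ := regClosed_compl hU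
  rw [hξ x U hU] at ha
  set C := Uᶜ with hCdef
  set W : Set X := {y | ρ x C - a < ρ y C} with hW
  set Ua := interior (closure W) with hUa
  have hUaReg : RegOpen Ua := regOpen_int_cl W
  -- W ⊆ U
  obtain ⟨V, hVopen, hVsub, _, hViff⟩ := hρ.k1star C hC
  have hWU : W ⊆ U := by
    intro y hy
    have hpos : 0 < ρ y C := lt_of_le_of_lt (by linarith) hy
    have : y ∈ V := (hViff y).1 hpos
    simpa [hCdef] using hVsub this
  have hUaU : Ua ⊆ U := by
    have : closure W ⊆ closure U := closure_mono hWU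
    calc Ua ⊆ interior (closure U) := interior_mono this
      _ = U := hU.symm
  -- W ⊆ Ua
  have hWopen : IsOpen W := isOpen_lt continuous_const (hρ.k3 C hC)
  have hWUa : W ⊆ Ua := hWopen.subset_interior_closure
  refine ⟨Ua, hUaReg, hUaU, ?_, ?_⟩
  · -- a ≤ ξ x Ua
    rw [hξ x Ua hUaReg]
    have hUacReg : RegClosed Uaᶜ := regClosed_compl hUaReg
    have h5 := hK5 x C Uaᶜ hC hUacReg
    have hsup : sSup {r : ℝ | ∃ y ∈ Uaᶜ, r = ρ y C} ≤ ρ x C - a := by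
      apply Real.sSup_le
      · rintro r ⟨y, hy, rfl⟩
        have : y ∉ W := fun h => hy (hWUa h)
        simpa [hW] using not_lt.1 this
      · linarith
    linarith
  · -- lower bound on ξ y U for y ∈ Ua
    intro y hy
    rw [hξ x U hU, hξ y U hU]
    have hclosed : IsClosed {z | ρ x C - a ≤ ρ z C} :=
      isClosed_le continuous_const (hρ.k3 C hC)
    have hsub : closure W ⊆ {z | ρ x C - a ≤ ρ z C} :=
      closure_minimal (fun z hz => show ρ x C - a ≤ ρ z C from le_of_lt hz) hclosed
    exact hsub (interior_subset hy)
end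

section
/- Let X be a quasi κ-metrizable topological space and Y a dense subspace of X. Then Y is quasi κ-metrizable: if ρ is a quasi κ-metric on X, then d(y, cl_Y U) := ρ(y, cl_X U), for U open in Y, defines a quasi κ-metric on Y. -/
/-! The quasi κ-metric of `X` is pulled back to `Y` by sending a regularly closed `C ⊆ Y` to
`closure (↑C)` in `X`. Density of `Y` makes this set regularly closed in `X` (the closure of an
open `V` of `X` equals the closure of `V ∩ Y`), and `C = Y ∩ closure (↑C)`, so membership,
inclusions and closures of chains are transported between `Y` and `X`. The given `d` agrees with
this pullback on regularly closed sets, which are the only sets the axioms evaluate it at. -/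

section RegClosed

variable {X : Type*} [TopologicalSpace X]

lemma regClosed_closure_of_isOpen {U : Set X} (hU : IsOpen U) : RegClosed (closure U) :=
  subset_antisymm (closure_mono (interior_maximal subset_closure hU))
    (closure_minimal interior_subset isClosed_closure)

lemma RegClosed.isClosed {C : Set X} (hC : RegClosed C) : IsClosed C := by
  rw [hC]
  exact isClosed_closure

lemma regClosed_closure_sUnion {S : Set (Set X)} (hS : ∀ C ∈ S, RegClosed C) :
    RegClosed (closure (⋃₀ S)) := by
  rw [Set.sUnion_eq_biUnion]
  have hU : closure (⋃ C ∈ S, C) = closure (⋃ C ∈ S, interior C) := by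
    refine subset_antisymm (closure_minimal ?_ isClosed_closure)
      (closure_mono (Set.iUnion₂_mono fun C _ => interior_subset))
    refine Set.iUnion₂_subset fun C hCS => ?_
    rw [hS C hCS]
    exact closure_mono (Set.subset_biUnion_of_mem (u := fun C => interior C) hCS)
  rw [hU]
  exact regClosed_closure_of_isOpen (isOpen_biUnion fun C _ => isOpen_interior)

end RegClosed

lemma IsQuasiKappaMetric.congr {X : Type*} [TopologicalSpace X] {ρ ρ' : X → Set X → ℝ}
    (hρ : IsQuasiKappaMetric ρ) (h : ∀ x C, RegClosed C → ρ x C = ρ' x C) :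
    IsQuasiKappaMetric ρ' where
  nonneg x C hC := h x C hC ▸ hρ.nonneg x C hC
  k1star C hC := by
    simpa only [← h _ C hC] using hρ.k1star C hC
  k2 x C C' hC hC' hCC' := h x C hC ▸ h x C' hC' ▸ hρ.k2 x C C' hC hC' hCC'
  k3 C hC := by
    simpa only [h _ C hC] using hρ.k3 C hC
  k4 S hS hSreg hSchain x := by
    rw [← h x _ (regClosed_closure_sUnion hSreg), hρ.k4 S hS hSreg hSchain x]
    congr 1
    ext r
    exact exists_congr fun C => and_congr_right fun hCS => by rw [h x C (hSreg C hCS)]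

section DenseSubspace

variable {X : Type*} [TopologicalSpace X] {Y : Set X}

lemma Dense.closure_image_val_preimage (hY : Dense Y) {V : Set X} (hV : IsOpen V) :
    closure ((Subtype.val : Y → X) '' (Subtype.val ⁻¹' V)) = closure V := by
  rw [Subtype.image_preimage_coe]
  refine subset_antisymm (closure_mono Set.inter_subset_right) ?_
  rw [Set.inter_comm]
  exact closure_minimal (hY.open_subset_closure_inter hV) isClosed_closure

lemma Dense.regClosed_closure_image_val (hY : Dense Y) {C : Set Y} (hC : RegClosed C) :
    RegClosed (closure ((Subtype.val : Y → X) '' C)) := by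
  obtain ⟨V, hV, hVC⟩ := isOpen_induced_iff.mp (isOpen_interior (s := C))
  rw [hC, closure_image_closure continuous_subtype_val, ← hVC, hY.closure_image_val_preimage hV]
  exact regClosed_closure_of_isOpen hV

lemma IsClosed.mem_iff_val_mem_closure_image {C : Set Y} (hC : IsClosed C) (y : Y) :
    y ∈ C ↔ (y : X) ∈ closure ((Subtype.val : Y → X) '' C) := by
  rw [← closure_subtype, hC.closure_eq]

lemma closure_image_val_closure_sUnion (S : Set (Set Y)) :
    closure ((Subtype.val : Y → X) '' closure (⋃₀ S)) =
      closure (⋃₀ ((fun C => closure ((Subtype.val : Y → X) '' C)) '' S)) := by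
  rw [closure_image_closure continuous_subtype_val, Set.sUnion_eq_biUnion, Set.image_iUnion₂,
    Set.sUnion_image]
  refine subset_antisymm (closure_mono (Set.iUnion₂_mono fun C _ => subset_closure))
    (closure_minimal (Set.iUnion₂_subset fun C hCS => ?_) isClosed_closure)
  exact closure_mono (Set.subset_biUnion_of_mem (u := fun C => Subtype.val '' C) hCS)

theorem IsQuasiKappaMetric.comap_val (hY : Dense Y) {ρ : X → Set X → ℝ}
    (hρ : IsQuasiKappaMetric ρ) :
    IsQuasiKappaMetric fun (y : Y) C => ρ y (closure (Subtype.val '' C)) where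
  nonneg y C hC := hρ.nonneg y _ (hY.regClosed_closure_image_val hC)
  k1star C hC := by
    obtain ⟨V, hV, hVC, hCV, hρV⟩ := hρ.k1star _ (hY.regClosed_closure_image_val hC)
    refine ⟨Subtype.val ⁻¹' V, hV.preimage continuous_subtype_val, fun y hy hyC => ?_,
      fun y hy => ?_, fun y => hρV y⟩
    · exact hVC hy ((hC.isClosed.mem_iff_val_mem_closure_image y).mp hyC)
    · rw [closure_subtype, hY.closure_image_val_preimage hV]
      exact hCV fun h => hy ((hC.isClosed.mem_iff_val_mem_closure_image y).mpr h)
  k2 y C C' hC hC' hCC' := hρ.k2 y _ _ (hY.regClosed_closure_image_val hC)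
    (hY.regClosed_closure_image_val hC') (closure_mono (Set.image_mono hCC'))
  k3 C hC := (hρ.k3 _ (hY.regClosed_closure_image_val hC)).comp continuous_subtype_val
  k4 S hS hSreg hSchain y := by
    have hchain := hSchain.image_of_map_rel _ _ (fun C => closure (Subtype.val '' C))
      fun C C' hCC' => closure_mono (Set.image_mono hCC')
    rw [closure_image_val_closure_sUnion, hρ.k4 _ (hS.image _)
      (Set.forall_mem_image.mpr fun C hC => hY.regClosed_closure_image_val (hSreg C hC)) hchain]
    simp only [Set.exists_mem_image]

end DenseSubspace

theorem stmt6 {X : Type*} [TopologicalSpace X] (Y : Set X) (hY : Dense Y)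
    (ρ : X → Set X → ℝ) (hρ : IsQuasiKappaMetric ρ)
    (d : Y → Set Y → ℝ)
    (hd : ∀ (y : Y) (U : Set Y), IsOpen U →
      d y (closure U) = ρ (y : X) (closure ((Subtype.val : Y → X) '' U))) :
    IsQuasiKappaMetric d := by
  refine (hρ.comap_val hY).congr fun y C hC => ?_
  rw [hC, hd y _ isOpen_interior, closure_image_closure continuous_subtype_val]
end

section
/- Let X be a quasi κ-metrizable space and Y a regularly closed subspace of X. Then Y is quasi κ-metrizable. -/
/-!
The restriction `ρ_Y(y, C) := ρ(y, C)` works. Since `Y` is closed, closures in `Y` are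
closures in `X`, and since `Y = closure (interior Y)`, a regularly closed subset of `Y` is
regularly closed in `X`; so K2, K3 and K4 transfer verbatim. For K1*, a set `V` dense in the
open set `X \ C` has `V ∩ Y` dense in `Y \ C`, again because `interior Y` is dense in `Y`.
-/

open Set

namespace RegClosed

variable {X : Type*} [TopologicalSpace X] {Y : Set X}

lemma isClosed_s7 (hY : RegClosed Y) : IsClosed Y := by
  rw [hY]
  exact isClosed_closure

lemma inter_subset_closure_inter_interior (hY : RegClosed Y) {U : Set X} (hU : IsOpen U) :
    U ∩ Y ⊆ closure (U ∩ interior Y) :=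
  (inter_subset_inter_right U hY.le).trans hU.inter_closure

lemma inter_subset_closure_inter_of_subset_closure (hY : RegClosed Y) {U V : Set X}
    (hU : IsOpen U) (hUV : U ⊆ closure V) : U ∩ Y ⊆ closure (V ∩ Y) :=
  calc U ∩ Y ⊆ closure (U ∩ interior Y) := hY.inter_subset_closure_inter_interior hU
    _ ⊆ closure (closure V ∩ interior Y) := closure_mono (inter_subset_inter_left _ hUV)
    _ ⊆ closure (V ∩ interior Y) := closure_minimal isOpen_interior.closure_inter isClosed_closure
    _ ⊆ closure (V ∩ Y) := closure_mono (inter_subset_inter_right V interior_subset)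

lemma image_val (hY : RegClosed Y) {C : Set Y} (hC : RegClosed C) :
    RegClosed (Subtype.val '' C) := by
  obtain ⟨U, hU, hUC⟩ := isOpen_induced_iff.mp (isOpen_interior (s := C))
  have himage : Subtype.val '' C = closure (U ∩ Y) := by
    rw [hC, ← hY.isClosed_s7.isClosedEmbedding_subtypeVal.closure_image_eq, ← hUC,
      Subtype.image_preimage_coe, inter_comm]
  have hsub : U ∩ interior Y ⊆ interior (Subtype.val '' C) :=
    interior_maximal ((inter_subset_inter_right U interior_subset).trans (himage ▸ subset_closure))
      (hU.inter isOpen_interior)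
  refine subset_antisymm ?_ ((himage ▸ isClosed_closure : IsClosed _).closure_subset_iff.2
    interior_subset)
  calc Subtype.val '' C = closure (U ∩ Y) := himage
    _ ⊆ closure (U ∩ interior Y) :=
      closure_minimal (hY.inter_subset_closure_inter_interior hU) isClosed_closure
    _ ⊆ closure (interior (Subtype.val '' C)) := closure_mono hsub

end RegClosed

theorem IsQuasiKappaMetric.restrict {X : Type*} [TopologicalSpace X] {ρ : X → Set X → ℝ}
    (hρ : IsQuasiKappaMetric ρ) {Y : Set X} (hY : RegClosed Y) :
    IsQuasiKappaMetric (fun (y : Y) C => ρ y (Subtype.val '' C)) where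
  nonneg _ _ hC := hρ.nonneg _ _ (hY.image_val hC)
  k1star C hC := by
    have hD := hY.image_val hC
    obtain ⟨V, hV, hVC, hCV, hρV⟩ := hρ.k1star _ hD
    refine ⟨Subtype.val ⁻¹' V, hV.preimage continuous_subtype_val,
      fun y hy hyC ↦ hVC hy ⟨y, hyC, rfl⟩, fun y hyC ↦ ?_, fun y ↦ hρV y⟩
    rw [closure_subtype, Subtype.image_preimage_coe, inter_comm]
    exact hY.inter_subset_closure_inter_of_subset_closure hD.isClosed_s7.isOpen_compl hCV
      ⟨Subtype.val_injective.mem_set_image.not.2 hyC, y.2⟩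
  k2 _ _ _ hC hC' h := hρ.k2 _ _ _ (hY.image_val hC) (hY.image_val hC') (image_mono h)
  k3 _ hC := (hρ.k3 _ (hY.image_val hC)).comp continuous_subtype_val
  k4 S hS hSreg hSchain y := by
    have hclosure : Subtype.val '' closure (⋃₀ S) = closure (⋃₀ (image Subtype.val '' S)) := by
      rw [← image_sUnion, hY.isClosed_s7.isClosedEmbedding_subtypeVal.closure_image_eq]
    rw [hclosure, hρ.k4 _ (hS.image _) (forall_mem_image.2 fun C hC ↦ hY.image_val (hSreg C hC))
      (hSchain.image_of_map_rel _ _ _ fun _ _ h ↦ image_mono h)]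
    simp only [exists_mem_image]

theorem stmt7 {X : Type*} [TopologicalSpace X] (Y : Set X) (hY : RegClosed Y)
    (hX : ∃ ρ : X → Set X → ℝ, IsQuasiKappaMetric ρ) :
    ∃ d : Y → Set Y → ℝ, IsQuasiKappaMetric d := by
  obtain ⟨ρ, hρ⟩ := hX
  exact ⟨_, hρ.restrict hY⟩
end

section
/- Let X be a topological space with countable cellularity (every family of pairwise disjoint nonempty open sets is countable), and let ρ(x,C) be a nonnegative function of x ∈ X and regularly closed C ⊆ X satisfying K2 (C ⊆ C' ⟹ ρ(x,C') ≤ ρ(x,C)) and the countable chain condition K4*: ρ(x, cl(⋃_n C_n)) = inf_n ρ(x,C_n) for every increasing sequence {C_n} of regularly closed sets. Then ρ satisfies the full condition K4: ρ(x, cl(⋃_α C_α)) = inf_α ρ(x,C_α) for every increasing transfinite chain {C_α} of regularly closed sets. -/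
/-- `X` has countable cellularity if every pairwise disjoint family of nonempty
open subsets of `X` is countable. -/
def CountableCellularity (X : Type*) [TopologicalSpace X] : Prop :=
  ∀ 𝒰 : Set (Set X), (∀ U ∈ 𝒰, IsOpen U ∧ U.Nonempty) →
    𝒰.PairwiseDisjoint id → 𝒰.Countable

open Classical in
/-- Running "maximum" of a sequence of sets from a chain. -/
noncomputable def chainSeq {X : Type*} (f : ℕ → Set X) : ℕ → Set X
  | 0 => f 0
  | n + 1 => if chainSeq f n ⊆ f (n + 1) then f (n + 1) else chainSeq f n

lemma regClosed_closure_isOpen {X : Type*} [TopologicalSpace X] {U : Set X}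
    (hU : IsOpen U) : RegClosed (closure U) := by
  refine subset_antisymm ?_ ?_
  · exact closure_mono (hU.subset_interior_iff.mpr subset_closure)
  · exact closure_minimal interior_subset isClosed_closure

theorem stmt8 {X : Type*} [TopologicalSpace X] (hcell : CountableCellularity X)
    (ρ : X → Set X → ℝ)
    (hnonneg : ∀ x C, RegClosed C → 0 ≤ ρ x C)
    (hK2 : ∀ x (C C' : Set X), RegClosed C → RegClosed C' → C ⊆ C' → ρ x C' ≤ ρ x C)
    (hK4star : ∀ C : ℕ → Set X, (∀ n, RegClosed (C n)) → Monotone C →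
      ∀ x, ρ x (closure (⋃ n, C n)) = ⨅ n, ρ x (C n)) :
    ∀ S : Set (Set X), S.Nonempty → (∀ C ∈ S, RegClosed C) → IsChain (· ⊆ ·) S →
      ∀ x, ρ x (closure (⋃₀ S)) = sInf {r : ℝ | ∃ C ∈ S, r = ρ x C} := by
  classical
  intro S hSne hreg hchain x
  obtain ⟨C₀, hC₀⟩ := hSne
  -- U is the union of interiors of members of S
  set U : Set X := ⋃ C ∈ S, interior C with hUdef
  have hUopen : IsOpen U := isOpen_biUnion fun C _ => isOpen_interior
  have hclS : closure (⋃₀ S) = closure U := by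
    apply subset_antisymm
    · have : ⋃₀ S ⊆ closure U := by
        intro y hy
        obtain ⟨C, hCS, hyC⟩ := hy
        have : y ∈ closure (interior C) := (hreg C hCS) ▸ hyC
        exact closure_mono (Set.subset_biUnion_of_mem hCS) this
      simpa using closure_minimal this isClosed_closure
    · apply closure_mono
      exact Set.iUnion₂_subset fun C hC => interior_subset.trans (Set.subset_sUnion_of_mem hC)
  -- Zorn: maximal pairwise disjoint family of nonempty open subsets of interiors
  set P : Set (Set (Set X)) := {𝒰 : Set (Set X) | (∀ V ∈ 𝒰, IsOpen V ∧ V.Nonempty ∧ ∃ C ∈ S, V ⊆ interior C) ∧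
    𝒰.PairwiseDisjoint id} with hPdef
  obtain ⟨𝒰, h𝒰max⟩ := zorn_subset P (by
    intro c hcP hcchain
    refine ⟨⋃₀ c, ⟨?_, ?_⟩, fun s hs => Set.subset_sUnion_of_mem hs⟩
    · rintro V ⟨u, huc, hVu⟩
      exact (hcP huc).1 V hVu
    · intro V hV W hW hVW
      obtain ⟨u, huc, hVu⟩ := hV
      obtain ⟨w, hwc, hWw⟩ := hW
      rcases hcchain.total huc hwc with h | h
      · exact (hcP hwc).2 (h hVu) hWw hVW
      · exact (hcP huc).2 hVu (h hWw) hVW)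
  have h𝒰P : 𝒰 ∈ P := h𝒰max.prop
  -- density of ⋃₀ 𝒰 in U
  have hdense : U ⊆ closure (⋃₀ 𝒰) := by
    intro y hy
    rw [mem_closure_iff]
    intro W hWopen hyW
    by_contra hempty
    rw [Set.not_nonempty_iff_eq_empty] at hempty
    obtain ⟨C, hCS, hyC⟩ := Set.mem_iUnion₂.mp hy
    set W' : Set X := W ∩ interior C with hW'def
    have hW'P : 𝒰 ∪ {W'} ∈ P := by
      constructor
      · rintro V (hV | hV)
        · exact h𝒰P.1 V hV
        · rw [Set.mem_singleton_iff] at hV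
          subst hV
          exact ⟨hWopen.inter isOpen_interior, ⟨y, hyW, hyC⟩, C, hCS, Set.inter_subset_right⟩
      · have hWdisj : ∀ V ∈ 𝒰, Disjoint W' V := by
          intro V hV
          refine Set.disjoint_left.mpr fun z hzW' hzV => ?_
          have : z ∈ W ∩ ⋃₀ 𝒰 := ⟨hzW'.1, V, hV, hzV⟩
          simp [hempty] at this
        rintro V (hV | hV) V' (hV' | hV') hVV'
        · exact h𝒰P.2 hV hV' hVV'
        · rw [Set.mem_singleton_iff] at hV'; subst hV'
          exact (hWdisj V hV).symm
        · rw [Set.mem_singleton_iff] at hV; subst hV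
          exact hWdisj V' hV'
        · rw [Set.mem_singleton_iff] at hV hV'
          exact absurd (hV.trans hV'.symm) hVV'
    have : 𝒰 ∪ {W'} = 𝒰 := by
      have := h𝒰max.2 hW'P Set.subset_union_left
      exact subset_antisymm this Set.subset_union_left
    have hW'mem : W' ∈ 𝒰 := by
      rw [← this]; exact Or.inr rfl
    have : y ∈ W ∩ ⋃₀ 𝒰 := ⟨hyW, W', hW'mem, hyW, hyC⟩
    simp [hempty] at this
  -- 𝒰 is countable
  have h𝒰count : 𝒰.Countable :=
    hcell 𝒰 (fun V hV => ⟨(h𝒰P.1 V hV).1, (h𝒰P.1 V hV).2.1⟩) h𝒰P.2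
  -- choose for each V ∈ 𝒰 a C V ∈ S with V ⊆ interior (C V)
  have hchoose : ∀ V ∈ 𝒰, ∃ C ∈ S, V ⊆ interior C := fun V hV => (h𝒰P.1 V hV).2.2
  choose! g hgS hgsub using hchoose
  set T : Set (Set X) := insert C₀ (g '' 𝒰) with hTdef
  have hTcount : T.Countable := (h𝒰count.image g).insert C₀
  have hTne : T.Nonempty := ⟨C₀, Or.inl rfl⟩
  have hTS : T ⊆ S := by
    rintro C (rfl | ⟨V, hV, rfl⟩)
    · exact hC₀
    · exact hgS V hV
  obtain ⟨f, hf⟩ := hTcount.exists_eq_range hTne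
  -- the increasing sequence D
  set D := chainSeq f with hDdef
  have hfS : ∀ n, f n ∈ S := fun n => hTS (hf ▸ Set.mem_range_self n)
  have hDS : ∀ n, D n ∈ S := by
    intro n
    induction n with
    | zero => exact hfS 0
    | succ n ih =>
      rw [hDdef, chainSeq]
      split
      · exact hfS (n + 1)
      · exact ih
  have hDmono : Monotone D := by
    apply monotone_nat_of_le_succ
    intro n
    rw [hDdef, chainSeq]
    split
    · assumption
    · exact le_rfl
  have hfD : ∀ n, f n ⊆ D n := by
    intro n
    cases n with
    | zero => rw [hDdef, chainSeq]
    | succ n =>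
      rw [hDdef, chainSeq]
      split
      · exact subset_rfl
      · rename_i h
        rcases hchain.total (hfS (n + 1)) (hDS n) with h' | h'
        · exact h'
        · exact absurd h' h
  -- key identity of closures
  have hkey : closure (⋃ n, D n) = closure (⋃₀ S) := by
    apply subset_antisymm
    · exact closure_mono (Set.iUnion_subset fun n => Set.subset_sUnion_of_mem (hDS n))
    · rw [hclS]
      have h1 : ⋃₀ 𝒰 ⊆ ⋃ n, D n := by
        rintro y ⟨V, hV, hyV⟩
        have : g V ∈ T := Or.inr ⟨V, hV, rfl⟩
        rw [hf] at this
        obtain ⟨n, hn⟩ := this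
        have : y ∈ g V := interior_subset (hgsub V hV hyV)
        exact Set.mem_iUnion.mpr ⟨n, hfD n (hn ▸ this)⟩
      calc closure U ⊆ closure (closure (⋃₀ 𝒰)) := closure_mono hdense
        _ = closure (⋃₀ 𝒰) := closure_closure
        _ ⊆ closure (⋃ n, D n) := closure_mono h1
  have hregcl : RegClosed (closure (⋃₀ S)) := hclS ▸ regClosed_closure_isOpen hUopen
  have hbdd : BddBelow {r : ℝ | ∃ C ∈ S, r = ρ x C} := by
    refine ⟨0, ?_⟩
    rintro r ⟨C, hC, rfl⟩
    exact hnonneg x C (hreg C hC)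
  have hval : ρ x (closure (⋃₀ S)) = ⨅ n, ρ x (D n) := by
    rw [← hkey]
    exact hK4star D (fun n => hreg _ (hDS n)) hDmono x
  apply le_antisymm
  · refine le_csInf ⟨ρ x C₀, C₀, hC₀, rfl⟩ ?_
    rintro r ⟨C, hC, rfl⟩
    exact hK2 x C _ (hreg C hC) hregcl
      ((Set.subset_sUnion_of_mem hC).trans subset_closure)
  · rw [hval]
    exact le_ciInf fun n => csInf_le hbdd ⟨D n, hDS n, rfl⟩
end

section
/- Let f : X → Y be a perfect open continuous surjection, ρ a quasi κ-metric on X, and define d(y, cl U) = sup{ρ(x, f⁻¹(cl U)) : x ∈ f⁻¹(y)} for open U ⊆ Y. Then d(·, cl U) is continuous on Y for every open U ⊆ Y. -/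
/-!
`d y (cl U)` is the maximum of the continuous function `x ↦ ρ(x, f⁻¹(cl U))` over the
compact fibre `f⁻¹(y)`. Hence `{y | c < d y} = f '' {x | c < ρ x _}` is open because `f` is
open, and `{y | c ≤ d y} = f '' {x | c ≤ ρ x _}` is closed because `f` is closed.
-/

theorem IsOpen.regClosed_closure {X : Type*} [TopologicalSpace X] {V : Set X} (hV : IsOpen V) :
    RegClosed (closure V) := by
  rw [RegClosed, ← hV.interior_eq, closure_interior_idem, hV.interior_eq]

section FiberSup

variable {X Y α : Type*} [TopologicalSpace X] [TopologicalSpace Y]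
  [ConditionallyCompleteLinearOrder α] [TopologicalSpace α] [OrderTopology α]
  {f : X → Y} {g : X → α}

theorem IsCompact.lt_sSup_image_iff_of_continuous {K : Set X} (hK : IsCompact K)
    (h0K : K.Nonempty) (hg : ContinuousOn g K) (c : α) :
    c < sSup (g '' K) ↔ ∃ x ∈ K, c < g x := by
  have : Nonempty α := ⟨g h0K.some⟩
  rw [lt_csSup_iff (hK.bddAbove_image hg) (h0K.image g), Set.exists_mem_image]

theorem IsOpenMap.lowerSemicontinuous_sSup_image_fiber (hopen : IsOpenMap f)
    (hg : Continuous g) (hfib : ∀ y, IsCompact (f ⁻¹' {y})) (hsurj : Function.Surjective f) :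
    LowerSemicontinuous fun y => sSup (g '' (f ⁻¹' {y})) := by
  rw [lowerSemicontinuous_iff_isOpen_preimage]
  intro c
  have hpre : (fun y => sSup (g '' (f ⁻¹' {y}))) ⁻¹' Set.Ioi c = f '' {x | c < g x} := by
    ext y
    simp only [Set.mem_preimage, Set.mem_Ioi,
      (hfib y).lt_sSup_image_iff_of_continuous (hsurj y) hg.continuousOn, Set.mem_image,
      Set.mem_ofPred_eq, Set.mem_singleton_iff]
    exact exists_congr fun x => and_comm
  rw [hpre]
  exact hopen _ (isOpen_lt continuous_const hg)

theorem IsClosedMap.upperSemicontinuous_sSup_image_fiber (hclosed : IsClosedMap f)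
    (hg : Continuous g) (hfib : ∀ y, IsCompact (f ⁻¹' {y})) (hsurj : Function.Surjective f) :
    UpperSemicontinuous fun y => sSup (g '' (f ⁻¹' {y})) := by
  rw [upperSemicontinuous_iff_isOpen_preimage]
  intro c
  have hpre : (fun y => sSup (g '' (f ⁻¹' {y}))) ⁻¹' Set.Iio c = (f '' {x | c ≤ g x})ᶜ := by
    ext y
    simp only [Set.mem_preimage, Set.mem_Iio,
      (hfib y).sSup_lt_iff_of_continuous (hsurj y) hg.continuousOn, Set.mem_compl_iff,
      Set.mem_image, Set.mem_ofPred_eq, Set.mem_singleton_iff, not_exists, not_and]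
    exact forall_congr' fun x => by rw [imp_not_comm, not_le]
  rw [hpre]
  exact (hclosed _ (isClosed_le continuous_const hg)).isOpen_compl

theorem continuous_sSup_image_fiber (hopen : IsOpenMap f) (hclosed : IsClosedMap f)
    (hg : Continuous g) (hfib : ∀ y, IsCompact (f ⁻¹' {y})) (hsurj : Function.Surjective f) :
    Continuous fun y => sSup (g '' (f ⁻¹' {y})) :=
  continuous_iff_lower_upperSemicontinuous.2
    ⟨hopen.lowerSemicontinuous_sSup_image_fiber hg hfib hsurj,
      hclosed.upperSemicontinuous_sSup_image_fiber hg hfib hsurj⟩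

end FiberSup

theorem stmt12 {X Y : Type*} [TopologicalSpace X] [TopologicalSpace Y]
    (f : X → Y) (hcont : Continuous f) (hopen : IsOpenMap f)
    (hclosed : IsClosedMap f) (hfib : ∀ y : Y, IsCompact (f ⁻¹' {y}))
    (hsurj : Function.Surjective f)
    (ρ : X → Set X → ℝ) (hρ : IsQuasiKappaMetric ρ)
    (d : Y → Set Y → ℝ)
    (hd : ∀ (y : Y) (U : Set Y), IsOpen U →
      d y (closure U) = sSup {r : ℝ | ∃ x ∈ f ⁻¹' {y}, r = ρ x (f ⁻¹' (closure U))}) :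
    ∀ U : Set Y, IsOpen U → Continuous (fun y => d y (closure U)) := by
  intro U hU
  have hC : RegClosed (f ⁻¹' closure U) := by
    rw [hopen.preimage_closure_eq_closure_preimage hcont]
    exact (hU.preimage hcont).regClosed_closure
  have hd_fiber : (fun y => d y (closure U)) =
      fun y => sSup ((ρ · (f ⁻¹' closure U)) '' (f ⁻¹' {y})) := by
    funext y
    rw [hd y U hU]
    congr 1
    ext r
    simp [eq_comm]
  rw [hd_fiber]
  exact continuous_sSup_image_fiber hopen hclosed (hρ.k3 _ hC) hfib hsurj
end

section
/- Let f : X → Y be a perfect open continuous surjection between topological spaces. If X is quasi κ-metrizable, then Y is quasi κ-metrizable, via d(y, cl U) = sup{ρ(x, f⁻¹(cl U)) : x ∈ f⁻¹(y)}. -/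
theorem stmt13 {X Y : Type*} [TopologicalSpace X] [TopologicalSpace Y]
    (f : X → Y) (hcont : Continuous f) (hopen : IsOpenMap f)
    (hclosed : IsClosedMap f) (hfib : ∀ y : Y, IsCompact (f ⁻¹' {y}))
    (hsurj : Function.Surjective f)
    (ρ : X → Set X → ℝ) (hρ : IsQuasiKappaMetric ρ) :
    ∃ d : Y → Set Y → ℝ,
      (∀ (y : Y) (U : Set Y), IsOpen U →
        d y (closure U) = sSup {r : ℝ | ∃ x ∈ f ⁻¹' {y}, r = ρ x (f ⁻¹' (closure U))}) ∧
      IsQuasiKappaMetric d := by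
  classical
  set d : Y → Set Y → ℝ :=
    fun y C => sSup {r : ℝ | ∃ x ∈ f ⁻¹' {y}, r = ρ x (f ⁻¹' C)} with hd
  have hpc : ∀ A : Set Y, f ⁻¹' closure A = closure (f ⁻¹' A) :=
    fun A => hopen.preimage_closure_eq_closure_preimage hcont A
  have hpi : ∀ A : Set Y, f ⁻¹' interior A = interior (f ⁻¹' A) :=
    fun A => hopen.preimage_interior_eq_interior_preimage hcont A
  have hregpre : ∀ C : Set Y, RegClosed C → RegClosed (f ⁻¹' C) := by
    intro C hC
    unfold RegClosed at hC ⊢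
    conv_lhs => rw [hC]
    rw [hpc, hpi]
  have hKne : ∀ y : Y, (f ⁻¹' {y}).Nonempty := fun y => hsurj y
  have himg : ∀ (y : Y) (C : Set Y),
      {r : ℝ | ∃ x ∈ f ⁻¹' {y}, r = ρ x (f ⁻¹' C)} =
        (fun x => ρ x (f ⁻¹' C)) '' (f ⁻¹' {y}) := by
    intro y C; ext r; simp [Set.mem_image, eq_comm]
  have hcomp : ∀ (y : Y) (C : Set Y), RegClosed C →
      IsCompact ((fun x => ρ x (f ⁻¹' C)) '' (f ⁻¹' {y})) :=
    fun y C hC => (hfib y).image (hρ.k3 _ (hregpre C hC))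
  have hbdd : ∀ (y : Y) (C : Set Y), RegClosed C →
      BddAbove {r : ℝ | ∃ x ∈ f ⁻¹' {y}, r = ρ x (f ⁻¹' C)} := by
    intro y C hC; rw [himg]; exact (hcomp y C hC).bddAbove
  have hne : ∀ (y : Y) (C : Set Y),
      {r : ℝ | ∃ x ∈ f ⁻¹' {y}, r = ρ x (f ⁻¹' C)}.Nonempty :=
    fun y C => (hKne y).elim fun x hx => ⟨ρ x (f ⁻¹' C), x, hx, rfl⟩
  have hle_d : ∀ (y : Y) (C : Set Y), RegClosed C → ∀ x ∈ f ⁻¹' {y},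
      ρ x (f ⁻¹' C) ≤ d y C :=
    fun y C hC x hx => le_csSup (hbdd y C hC) ⟨x, hx, rfl⟩
  have hmax : ∀ (y : Y) (C : Set Y), RegClosed C →
      ∃ x ∈ f ⁻¹' {y}, ρ x (f ⁻¹' C) = d y C := by
    intro y C hC
    have h1 := (hcomp y C hC).sSup_mem ((hKne y).image _)
    rw [← himg] at h1
    obtain ⟨x, hx, hxe⟩ := h1
    exact ⟨x, hx, hxe.symm⟩
  have hd0 : ∀ (y : Y) (C : Set Y), RegClosed C → 0 ≤ d y C := by
    intro y C hC
    obtain ⟨x, hx⟩ := hKne y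
    exact le_trans (hρ.nonneg x _ (hregpre C hC)) (hle_d y C hC x hx)
  -- closed-map neighborhood lemma
  have hnbhd : ∀ (y : Y) (U : Set X), IsOpen U → f ⁻¹' {y} ⊆ U →
      ∃ W : Set Y, IsOpen W ∧ y ∈ W ∧ f ⁻¹' W ⊆ U := by
    intro y U hU hsub
    refine ⟨(f '' Uᶜ)ᶜ, (hclosed _ hU.isClosed_compl).isOpen_compl, ?_, ?_⟩
    · rintro ⟨x, hx, hfx⟩
      exact hx (hsub (by simp [hfx]))
    · intro x hx
      by_contra hxU
      exact hx ⟨x, hxU, rfl⟩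
  -- closure of an open set is regularly closed
  have hrco : ∀ U : Set Y, IsOpen U → RegClosed (closure U) := by
    intro U hU
    refine subset_antisymm ?_ ?_
    · exact closure_mono (interior_maximal subset_closure hU)
    · calc closure (interior (closure U)) ⊆ closure (closure U) :=
            closure_mono interior_subset
        _ = closure U := closure_closure
  refine ⟨d, fun y U hU => rfl, ?_⟩
  refine ⟨hd0, ?_, ?_, ?_, ?_⟩
  -- K1*
  · intro C hC
    obtain ⟨V, hVopen, hVsub, hVdense, hViff⟩ := hρ.k1star (f ⁻¹' C) (hregpre C hC)
    refine ⟨f '' V, hopen V hVopen, ?_, ?_, ?_⟩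
    · rintro _ ⟨x, hx, rfl⟩
      exact hVsub hx
    · intro y hy
      obtain ⟨x, hx⟩ := hsurj y
      have hx' : x ∈ (f ⁻¹' C)ᶜ := by simp only [Set.mem_compl_iff, Set.mem_preimage, hx]; exact hy
      have hxcl : x ∈ closure V := hVdense hx'
      have : f x ∈ closure (f '' V) :=
        image_closure_subset_closure_image hcont ⟨x, hxcl, rfl⟩
      rwa [hx] at this
    · intro y
      constructor
      · intro hpos
        obtain ⟨x, hx, hxe⟩ := hmax y C hC
        have : 0 < ρ x (f ⁻¹' C) := by rw [hxe]; exact hpos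
        exact ⟨x, (hViff x).mp this, hx⟩
      · rintro ⟨x, hxV, rfl⟩
        have hx : x ∈ f ⁻¹' {f x} := rfl
        exact lt_of_lt_of_le ((hViff x).mpr hxV) (hle_d (f x) C hC x hx)
  -- K2
  · intro y C C' hC hC' hsub
    apply csSup_le (hne y C')
    rintro r ⟨x, hx, rfl⟩
    calc ρ x (f ⁻¹' C') ≤ ρ x (f ⁻¹' C) :=
          hρ.k2 x _ _ (hregpre C hC) (hregpre C' hC') (Set.preimage_mono hsub)
      _ ≤ d y C := hle_d y C hC x hx
  -- K3
  · intro C hC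
    have hg : Continuous (fun x => ρ x (f ⁻¹' C)) := hρ.k3 _ (hregpre C hC)
    rw [continuous_iff_continuousAt]
    intro y
    rw [ContinuousAt, Metric.tendsto_nhds]
    intro ε hε
    obtain ⟨x₀, hx₀, hx₀e⟩ := hmax y C hC
    have hU1 : IsOpen {x : X | d y C - ε/2 < ρ x (f ⁻¹' C)} :=
      isOpen_lt continuous_const hg
    have hU2 : IsOpen {x : X | ρ x (f ⁻¹' C) < d y C + ε/2} :=
      isOpen_lt hg continuous_const
    have hsub2 : f ⁻¹' {y} ⊆ {x : X | ρ x (f ⁻¹' C) < d y C + ε/2} := fun x hx =>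
      lt_of_le_of_lt (hle_d y C hC x hx) (by linarith)
    obtain ⟨W2, hW2o, hyW2, hW2sub⟩ := hnbhd y _ hU2 hsub2
    have hyW1 : y ∈ f '' {x : X | d y C - ε/2 < ρ x (f ⁻¹' C)} := by
      refine ⟨x₀, ?_, hx₀⟩
      show d y C - ε/2 < ρ x₀ (f ⁻¹' C)
      rw [hx₀e]; linarith
    have hWopen : IsOpen (f '' {x : X | d y C - ε/2 < ρ x (f ⁻¹' C)} ∩ W2) :=
      (hopen _ hU1).inter hW2o
    filter_upwards [hWopen.mem_nhds ⟨hyW1, hyW2⟩] with y' hy'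
    obtain ⟨⟨x₁, hx₁, hfx₁⟩, hy'W2⟩ := hy'
    have hx₁fib : x₁ ∈ f ⁻¹' {y'} := by simp [hfx₁]
    have hlow : d y C - ε/2 < d y' C := lt_of_lt_of_le hx₁ (hle_d y' C hC x₁ hx₁fib)
    have hhigh : d y' C ≤ d y C + ε/2 := by
      apply csSup_le (hne y' C)
      rintro r ⟨x, hx, rfl⟩
      have hxW2 : x ∈ f ⁻¹' W2 := by
        have : f x = y' := hx
        simp [Set.mem_preimage, this, hy'W2]
      exact le_of_lt (hW2sub hxW2)
    rw [Real.dist_eq, abs_lt]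
    constructor <;> linarith
  -- K4
  · intro S hSne hSreg hSchain y
    have hDreg : RegClosed (closure (⋃₀ S)) := by
      have h1 : IsOpen (⋃ C ∈ S, interior C) := isOpen_biUnion fun C _ => isOpen_interior
      have h2 : closure (⋃₀ S) = closure (⋃ C ∈ S, interior C) := by
        apply subset_antisymm
        · apply closure_minimal ?_ isClosed_closure
          rintro x ⟨C, hC, hxC⟩
          rw [hSreg C hC] at hxC
          exact closure_mono (Set.subset_biUnion_of_mem hC) hxC
        · apply closure_mono
          rintro x hx
          simp only [Set.mem_iUnion] at hx
          obtain ⟨C, hC, hxC⟩ := hx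
          exact ⟨C, hC, interior_subset hxC⟩
      rw [h2]
      exact hrco _ h1
    have hS'ne : ((fun C => f ⁻¹' C) '' S).Nonempty := hSne.image _
    have key : ∀ x : X, ρ x (f ⁻¹' closure (⋃₀ S)) =
        sInf {r : ℝ | ∃ C ∈ S, r = ρ x (f ⁻¹' C)} := by
      intro x
      have h1 : f ⁻¹' closure (⋃₀ S) = closure (⋃₀ ((fun C => f ⁻¹' C) '' S)) := by
        rw [hpc, Set.preimage_sUnion, Set.sUnion_image]
      rw [h1, hρ.k4 _ hS'ne ?_ ?_ x]
      · congr 1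
        ext r
        constructor
        · rintro ⟨D, ⟨C, hC, rfl⟩, rfl⟩
          exact ⟨C, hC, rfl⟩
        · rintro ⟨C, hC, rfl⟩
          exact ⟨_, ⟨C, hC, rfl⟩, rfl⟩
      · rintro D ⟨C, hC, rfl⟩
        exact hregpre C (hSreg C hC)
      · rintro D ⟨C, hC, rfl⟩ D' ⟨C', hC', rfl⟩ hne'
        rcases eq_or_ne C C' with rfl | hcc
        · exact absurd rfl hne'
        · rcases hSchain hC hC' hcc with h | h
          · exact Or.inl (Set.preimage_mono h)
          · exact Or.inr (Set.preimage_mono h)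
    have hRne : {r : ℝ | ∃ C ∈ S, r = d y C}.Nonempty :=
      hSne.elim fun C hC => ⟨d y C, C, hC, rfl⟩
    have hRbb : BddBelow {r : ℝ | ∃ C ∈ S, r = d y C} := by
      refine ⟨0, ?_⟩
      rintro r ⟨C, hC, rfl⟩
      exact hd0 y C (hSreg C hC)
    have hIbb : ∀ x : X, BddBelow {r : ℝ | ∃ C ∈ S, r = ρ x (f ⁻¹' C)} := by
      intro x
      refine ⟨0, ?_⟩
      rintro r ⟨C, hC, rfl⟩
      exact hρ.nonneg x _ (hregpre C (hSreg C hC))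
    apply le_antisymm
    · apply csSup_le (hne y (closure (⋃₀ S)))
      rintro r ⟨x, hx, rfl⟩
      rw [key x]
      apply le_csInf hRne
      rintro r ⟨C, hC, rfl⟩
      calc sInf {r : ℝ | ∃ C ∈ S, r = ρ x (f ⁻¹' C)} ≤ ρ x (f ⁻¹' C) :=
            csInf_le (hIbb x) ⟨C, hC, rfl⟩
        _ ≤ d y C := hle_d y C (hSreg C hC) x hx
    · set M := sInf {r : ℝ | ∃ C ∈ S, r = d y C} with hM
      have hcs : CompactSpace ↥(f ⁻¹' {y}) := isCompact_iff_compactSpace.mp (hfib y)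
      obtain ⟨C₀, hC₀⟩ := hSne
      have hni : Nonempty {C // C ∈ S} := ⟨⟨C₀, hC₀⟩⟩
      set t : {C // C ∈ S} → Set ↥(f ⁻¹' {y}) :=
        fun C => {x : ↥(f ⁻¹' {y}) | M ≤ ρ x.1 (f ⁻¹' C.1)} with ht
      have htcl : ∀ C, IsClosed (t C) := fun C =>
        isClosed_le continuous_const
          ((hρ.k3 _ (hregpre _ (hSreg _ C.2))).comp continuous_subtype_val)
      have htcp : ∀ C, IsCompact (t C) := fun C => (htcl C).isCompact
      have htne : ∀ C, (t C).Nonempty := by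
        intro C
        obtain ⟨x, hx, hxe⟩ := hmax y C.1 (hSreg _ C.2)
        refine ⟨⟨x, hx⟩, ?_⟩
        show M ≤ ρ x (f ⁻¹' C.1)
        rw [hxe]
        exact csInf_le hRbb ⟨C.1, C.2, rfl⟩
      have htsub : ∀ C C' : {C // C ∈ S}, C.1 ⊆ C'.1 → t C' ⊆ t C := by
        intro C C' hsub x hx
        exact le_trans hx (hρ.k2 x.1 _ _ (hregpre _ (hSreg _ C.2))
          (hregpre _ (hSreg _ C'.2)) (Set.preimage_mono hsub))
      have htdir : Directed (· ⊇ ·) t := by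
        intro C C'
        rcases eq_or_ne C.1 C'.1 with h | h
        · refine ⟨C, le_refl _, ?_⟩
          have : t C = t C' := by
            have : C = C' := Subtype.ext h
            rw [this]
          rw [this]
        · rcases hSchain C.2 C'.2 h with hss | hss
          · exact ⟨C', htsub C C' hss, le_refl _⟩
          · exact ⟨C, le_refl _, htsub C' C hss⟩
      obtain ⟨x, hxmem⟩ :=
        IsCompact.nonempty_iInter_of_directed_nonempty_isCompact_isClosed t htdir htne htcp htcl
      have hxall : ∀ C (hC : C ∈ S), M ≤ ρ x.1 (f ⁻¹' C) := fun C hC =>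
        Set.mem_iInter.mp hxmem ⟨C, hC⟩
      have hMx : M ≤ ρ x.1 (f ⁻¹' closure (⋃₀ S)) := by
        rw [key x.1]
        refine le_csInf ⟨ρ x.1 (f ⁻¹' C₀), C₀, hC₀, rfl⟩ ?_
        rintro r ⟨C, hC, rfl⟩
        exact hxall C hC
      exact hMx.trans (hle_d y (closure (⋃₀ S)) hDreg x.1 x.2)
end

section
/- Let X be a compact Hausdorff space, e : 𝓣_X → 𝓣_Z a function from the topology of X to the topology of an ambient space Z ⊇ X such that e(U) ∩ e(V) = ∅ whenever U ∩ V = ∅, and e(U) ∩ X is dense in U for all open U ⊆ X. Define e₁(U) = ⋃{e(V) : V open in X, cl V ⊆ U}. Then e₁ also satisfies both properties, is monotone (U ⊆ V ⟹ e₁(U) ⊆ e₁(V)), and commutes with increasing unions: for every increasing transfinite chain {U_α} of open sets of X, e₁(⋃_α U_α) = ⋃_α e₁(U_α). -/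
/-- Given `e` from the topology of the subspace `X` into the open sets of the ambient
space, `e₁ U` is the union of all `e V` with `V` open and `closure V ⊆ U`. -/
def eOne {Z : Type*} [TopologicalSpace Z] {X : Set Z}
    (e : Set X → Set Z) (U : Set X) : Set Z :=
  ⋃₀ {W : Set Z | ∃ V : Set X, IsOpen V ∧ closure V ⊆ U ∧ W = e V}

theorem stmt16 {Z : Type*} [TopologicalSpace Z] (X : Set Z)
    (hXcomp : IsCompact X) [T2Space X]
    (e : Set X → Set Z)
    (hopen : ∀ U : Set X, IsOpen U → IsOpen (e U))
    (hdisj : ∀ U V : Set X, IsOpen U → IsOpen V → U ∩ V = ∅ → e U ∩ e V = ∅)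
    (hdense : ∀ U : Set X, IsOpen U →
      U ⊆ closure ((Subtype.val : X → Z) ⁻¹' e U)) :
    (∀ U : Set X, IsOpen U → IsOpen (eOne e U)) ∧
    (∀ U V : Set X, IsOpen U → IsOpen V → U ∩ V = ∅ → eOne e U ∩ eOne e V = ∅) ∧
    (∀ U : Set X, IsOpen U → U ⊆ closure ((Subtype.val : X → Z) ⁻¹' eOne e U)) ∧
    (∀ U V : Set X, U ⊆ V → eOne e U ⊆ eOne e V) ∧
    (∀ S : Set (Set X), (∀ U ∈ S, IsOpen U) → IsChain (· ⊆ ·) S →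
      eOne e (⋃₀ S) = ⋃ U ∈ S, eOne e U) := by
  haveI : CompactSpace X := isCompact_iff_compactSpace.mp hXcomp
  have hempty : e ∅ = ∅ := by
    have h := hdisj ∅ ∅ isOpen_empty isOpen_empty (by simp)
    simpa using h
  have hmono : ∀ U V : Set X, U ⊆ V → eOne e U ⊆ eOne e V := by
    intro U V hUV z hz
    obtain ⟨W, ⟨V', hV', hcl, rfl⟩, hzW⟩ := hz
    exact ⟨e V', ⟨V', hV', hcl.trans hUV, rfl⟩, hzW⟩
  refine ⟨?_, ?_, ?_, hmono, ?_⟩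
  · intro U hU
    apply isOpen_sUnion
    rintro W ⟨V, hV, hcl, rfl⟩
    exact hopen V hV
  · intro U V hU hV hUV
    ext z
    simp only [Set.mem_inter_iff, Set.mem_empty_iff_false, iff_false, not_and]
    rintro ⟨W1, ⟨V1, hV1, hc1, rfl⟩, hz1⟩ ⟨W2, ⟨V2, hV2, hc2, rfl⟩, hz2⟩
    have h12 : V1 ∩ V2 = ∅ := by
      apply Set.eq_empty_of_subset_empty
      calc V1 ∩ V2 ⊆ U ∩ V :=
            Set.inter_subset_inter (subset_closure.trans hc1) (subset_closure.trans hc2)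
        _ = ∅ := hUV
    have hmem : z ∈ e V1 ∩ e V2 := ⟨hz1, hz2⟩
    rw [hdisj V1 V2 hV1 hV2 h12] at hmem
    exact hmem
  · intro U hU x hx
    obtain ⟨t, ht, htc, hts⟩ := exists_mem_nhds_isClosed_subset (hU.mem_nhds hx)
    have hxint : x ∈ interior t := mem_interior_iff_mem_nhds.mpr ht
    have hclint : closure (interior t) ⊆ U :=
      (closure_minimal interior_subset htc).trans hts
    have hsub : e (interior t) ⊆ eOne e U := fun z hz =>
      ⟨e (interior t), ⟨interior t, isOpen_interior, hclint, rfl⟩, hz⟩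
    exact closure_mono (Set.preimage_mono hsub) (hdense (interior t) isOpen_interior hxint)
  · intro S hSopen hchain
    apply Set.Subset.antisymm
    · rintro z ⟨W, ⟨V, hV, hcl, rfl⟩, hzW⟩
      rcases S.eq_empty_or_nonempty with rfl | hne
      · simp only [Set.sUnion_empty, Set.subset_empty_iff] at hcl
        have hVe : V = ∅ := Set.eq_empty_of_subset_empty (subset_closure.trans hcl.subset)
        rw [hVe, hempty] at hzW
        exact absurd hzW (Set.notMem_empty z)
      · haveI : Nonempty S := hne.to_subtype
        have hdir : Directed (· ⊆ ·) (fun U : S => (U : Set X)) :=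
          hchain.directedOn.directed_val
        have hcov : closure V ⊆ ⋃ U : S, (U : Set X) := by
          rwa [← Set.sUnion_eq_iUnion]
        obtain ⟨⟨U, hUS⟩, hVU⟩ := (isClosed_closure.isCompact).elim_directed_cover
          (fun U : S => (U : Set X)) (fun U => hSopen U U.2) hcov hdir
        exact Set.mem_biUnion hUS ⟨e V, ⟨V, hV, hVU, rfl⟩, hzW⟩
    · intro z hz
      obtain ⟨U, hU, hzU⟩ := Set.mem_iUnion₂.mp hz
      exact hmono U (⋃₀ S) (Set.subset_sUnion_of_mem hU) hzU
end

section
/- Let X be a compact Hausdorff space with a weak κ-metric d. Suppose B is a d-admissible index set for an embedding X ⊆ [0,1]^A (with B ⊆ A countable), meaning that the projection p_B : X → p_B(X) satisfies p_B ≺ d(·, cl p_B⁻¹(V)) for every V in the countable finitely-additive base 𝓐_B^{<ω} of p_B(X). Then p_B is skeletal: for every nonempty open U ⊆ X, the closure of p_B(U) in p_B(X) has nonempty interior. -/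
/-- A weak κ-metric on `X`: a nonnegative function of a point and a regularly closed
set satisfying K1*, K2, K3 and K4₀ (continuity of the infimum over increasing chains). -/
structure IsWeakKappaMetric {X : Type*} [TopologicalSpace X] (d : X → Set X → ℝ) : Prop where
  nonneg : ∀ x C, RegClosed C → 0 ≤ d x C
  k1star : ∀ C : Set X, RegClosed C → ∃ V : Set X, IsOpen V ∧ V ⊆ Cᶜ ∧
    Cᶜ ⊆ closure V ∧ ∀ x, 0 < d x C ↔ x ∈ V
  k2 : ∀ x (C C' : Set X), RegClosed C → RegClosed C' → C ⊆ C' → d x C' ≤ d x C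
  k3 : ∀ C : Set X, RegClosed C → Continuous (fun x => d x C)
  k4zero : ∀ S : Set (Set X), S.Nonempty → (∀ C ∈ S, RegClosed C) → IsChain (· ⊆ ·) S →
    Continuous (fun x => sInf {r : ℝ | ∃ C ∈ S, r = d x C})

/-- Increasing unions of an enumerated family. -/
def chainUnion {α : Type*} (e : ℕ → Set α) : ℕ → Set α
  | 0 => e 0
  | n + 1 => chainUnion e n ∪ e (n + 1)

lemma chainUnion_mono {α : Type*} (e : ℕ → Set α) : Monotone (chainUnion e) :=
  monotone_nat_of_le_succ fun _ => Set.subset_union_left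

lemma subset_chainUnion {α : Type*} (e : ℕ → Set α) (n : ℕ) : e n ⊆ chainUnion e n := by
  cases n with
  | zero => exact subset_rfl
  | succ n => exact Set.subset_union_right

lemma regClosed_closure_of_isOpen_s17 {X : Type*} [TopologicalSpace X] {O : Set X}
    (hO : IsOpen O) : RegClosed (closure O) := by
  unfold RegClosed
  apply subset_antisymm
  · exact closure_mono (hO.subset_interior_iff.mpr subset_closure)
  · exact closure_minimal interior_subset isClosed_closure

theorem stmt17 {X : Type*} [TopologicalSpace X] [CompactSpace X] [T2Space X]
    (d : X → Set X → ℝ) (hd : IsWeakKappaMetric d)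
    {A : Type*} (B : Set A) (hB : B.Countable)
    (ε : X → A → unitInterval) (hemb : Topology.IsEmbedding ε)
    (pB : X → B → unitInterval) (hpB : ∀ x (b : B), pB x b = ε x (b : A))
    (q : X → Set.range pB) (hq : ∀ x, (q x : B → unitInterval) = pB x)
    (𝓐 : Set (Set (Set.range pB))) (h𝓐count : 𝓐.Countable)
    (h𝓐base : TopologicalSpace.IsTopologicalBasis 𝓐)
    (h𝓐union : ∀ V ∈ 𝓐, ∀ W ∈ 𝓐, V ∪ W ∈ 𝓐)
    (hadm : ∀ V ∈ 𝓐, ∀ x₁ x₂ : X, pB x₁ = pB x₂ →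
      d x₁ (closure (q ⁻¹' V)) = d x₂ (closure (q ⁻¹' V))) :
    ∀ U : Set X, IsOpen U → U.Nonempty →
      (interior (closure (q '' U))).Nonempty := by
  intro U hU hUne
  by_contra hempty
  rw [Set.not_nonempty_iff_eq_empty] at hempty
  obtain ⟨xU, hxU⟩ := hUne
  -- continuity of pB and q
  have hpBc : Continuous pB := by
    have hrw : pB = fun x (b : B) => ε x (b : A) := by
      funext x b; exact hpB x b
    rw [hrw]
    exact continuous_pi fun b => (continuous_apply (b : A)).comp hemb.continuous
  have hqc : Continuous q := by
    rw [continuous_induced_rng]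
    have : Subtype.val ∘ q = pB := funext hq
    rw [this]; exact hpBc
  have hqsurj : Function.Surjective q := by
    rintro ⟨y, x, rfl⟩
    exact ⟨x, Subtype.ext (hq x)⟩
  -- d vanishes on the set
  have dzero : ∀ C, RegClosed C → ∀ x ∈ C, d x C = 0 := by
    intro C hC x hx
    obtain ⟨V, _, hVsub, _, hViff⟩ := hd.k1star C hC
    have h1 : ¬ 0 < d x C := fun h => hVsub ((hViff x).mp h) hx
    linarith [hd.nonneg x C hC]
  -- the dense open set W
  set W : Set (Set.range pB) := (closure (q '' U))ᶜ with hWdef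
  have hWopen : IsOpen W := isClosed_closure.isOpen_compl
  have hWdense : Dense W := interior_eq_empty_iff_dense_compl.mp hempty
  haveI : Nonempty (Set.range pB) := ⟨q xU⟩
  obtain ⟨y₀, hy₀⟩ := hWdense.nonempty
  -- enumerate the basis elements inside W
  set S' : Set (Set (Set.range pB)) := {V | V ∈ 𝓐 ∧ V ⊆ W} with hS'def
  have hS'ne : S'.Nonempty := by
    obtain ⟨V, hV𝓐, _, hVW⟩ := h𝓐base.exists_subset_of_mem_open hy₀ hWopen
    exact ⟨V, hV𝓐, hVW⟩
  have hS'count : S'.Countable := h𝓐count.mono fun V hV => hV.1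
  obtain ⟨e, he⟩ := hS'count.exists_eq_range hS'ne
  have heS' : ∀ n, e n ∈ S' := fun n => he ▸ ⟨n, rfl⟩
  have hVn𝓐 : ∀ n, chainUnion e n ∈ 𝓐 := by
    intro n
    induction n with
    | zero => exact (heS' 0).1
    | succ n ih => exact h𝓐union _ ih _ (heS' (n + 1)).1
  have hVnW : ∀ n, chainUnion e n ⊆ W := by
    intro n
    induction n with
    | zero => exact (heS' 0).2
    | succ n ih => exact Set.union_subset ih (heS' (n + 1)).2
  -- the chain of regularly closed sets
  set Cn : ℕ → Set X := fun n => closure (q ⁻¹' chainUnion e n) with hCndef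
  have hCnreg : ∀ n, RegClosed (Cn n) := fun n =>
    regClosed_closure_of_isOpen_s17 ((h𝓐base.isOpen (hVn𝓐 n)).preimage hqc)
  have hCnmono : Monotone Cn := fun m n h =>
    closure_mono (Set.preimage_mono (chainUnion_mono e h))
  set S : Set (Set X) := Set.range Cn with hSdef
  set f : X → ℝ := fun x => sInf {r : ℝ | ∃ C ∈ S, r = d x C} with hfdef
  have hfe : ∀ x n, d x (Cn n) ∈ {r : ℝ | ∃ C ∈ S, r = d x C} :=
    fun x n => ⟨Cn n, ⟨n, rfl⟩, rfl⟩
  have hbdd : ∀ x, BddBelow {r : ℝ | ∃ C ∈ S, r = d x C} := by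
    intro x
    refine ⟨0, ?_⟩
    rintro r ⟨C, ⟨n, rfl⟩, rfl⟩
    exact hd.nonneg x _ (hCnreg n)
  have hfle : ∀ x n, f x ≤ d x (Cn n) := fun x n => csInf_le (hbdd x) (hfe x n)
  have hfcont : Continuous f := by
    refine hd.k4zero S ⟨Cn 0, 0, rfl⟩ ?_ ?_
    · rintro C ⟨n, rfl⟩; exact hCnreg n
    · rintro C ⟨m, rfl⟩ C' ⟨n, rfl⟩ _
      rcases le_total m n with h | h
      · exact Or.inl (hCnmono h)
      · exact Or.inr (hCnmono h)
  -- f factors through pB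
  have hff : ∀ x₁ x₂ : X, pB x₁ = pB x₂ → f x₁ = f x₂ := by
    intro x₁ x₂ hp
    have hsets : {r : ℝ | ∃ C ∈ S, r = d x₁ C} = {r : ℝ | ∃ C ∈ S, r = d x₂ C} := by
      ext r
      constructor
      · rintro ⟨C, ⟨n, rfl⟩, rfl⟩
        refine ⟨Cn n, ⟨n, rfl⟩, ?_⟩
        simp only [hCndef]
        exact hadm _ (hVn𝓐 n) x₁ x₂ hp
      · rintro ⟨C, ⟨n, rfl⟩, rfl⟩
        refine ⟨Cn n, ⟨n, rfl⟩, ?_⟩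
        simp only [hCndef]
        exact (hadm _ (hVn𝓐 n) x₁ x₂ hp).symm
    simp only [hfdef, hsets]
  -- the big regularly closed set
  set Cinf : Set X := closure (q ⁻¹' W) with hCinfdef
  have hCinfreg : RegClosed Cinf := regClosed_closure_of_isOpen_s17 (hWopen.preimage hqc)
  have hfge : ∀ x, d x Cinf ≤ f x := by
    intro x
    refine le_csInf ⟨_, hfe x 0⟩ ?_
    rintro r ⟨C, ⟨n, rfl⟩, rfl⟩
    exact hd.k2 x (Cn n) Cinf (hCnreg n) hCinfreg
      (closure_mono (Set.preimage_mono (hVnW n)))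
  -- U is disjoint from Cinf
  have hUC : U ⊆ Cinfᶜ := by
    have hdisj : Disjoint U (q ⁻¹' W) := by
      rw [Set.disjoint_left]
      intro x hxU hxW
      exact hxW (subset_closure (Set.mem_image_of_mem q hxU))
    have hdisj2 : Disjoint U (closure (q ⁻¹' W)) := hdisj.closure_right hU
    intro x hx hxC
    exact Set.disjoint_left.mp hdisj2 hx hxC
  -- pick a point in U with f > 0
  obtain ⟨V, hVo, hVsub, hVdense, hViff⟩ := hd.k1star Cinf hCinfreg
  obtain ⟨x₀, hx₀U, hx₀V⟩ :=
    (mem_closure_iff.mp (hVdense (hUC hxU)) U hU hxU)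
  have hc : 0 < f x₀ := lt_of_lt_of_le ((hViff x₀).mpr hx₀V) (hfge x₀)
  set c : ℝ := f x₀ with hcdef
  -- the saturated open set O
  set O : Set X := f ⁻¹' Set.Ioi (c / 2) with hOdef
  have hOopen : IsOpen O := IsOpen.preimage hfcont isOpen_Ioi
  have hx₀O : x₀ ∈ O := by
    simp only [hOdef, Set.mem_preimage, Set.mem_Ioi]
    linarith
  have hsat : ∀ x x' : X, q x = q x' → f x = f x' := by
    intro x x' h
    exact hff x x' (by rw [← hq x, ← hq x', h])
  have himg : q '' O = (q '' Oᶜ)ᶜ := by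
    ext y
    constructor
    · rintro ⟨x, hx, rfl⟩ ⟨x', hx', hx'eq⟩
      have : f x' = f x := hsat x' x hx'eq
      exact hx' (by simpa only [hOdef, Set.mem_preimage, Set.mem_Ioi, this] using hx)
    · intro hy
      obtain ⟨x, rfl⟩ := hqsurj y
      refine ⟨x, ?_, rfl⟩
      by_contra hxO
      exact hy ⟨x, hxO, rfl⟩
  have hqOopen : IsOpen (q '' O) := by
    rw [himg]
    exact (hqc.isClosedMap _ hOopen.isClosed_compl).isOpen_compl
  have hqOne : (q '' O).Nonempty := ⟨q x₀, x₀, hx₀O, rfl⟩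
  obtain ⟨y, hyO, hyW⟩ := hWdense.inter_open_nonempty _ hqOopen hqOne
  obtain ⟨x₁, hx₁O, rfl⟩ := hyO
  -- q x₁ ∈ W lands in some basis element, hence in some Cn
  obtain ⟨V', hV'𝓐, hxV', hV'W⟩ := h𝓐base.exists_subset_of_mem_open hyW hWopen
  have hV'S' : V' ∈ S' := ⟨hV'𝓐, hV'W⟩
  rw [he] at hV'S'
  obtain ⟨k, rfl⟩ := hV'S'
  have hx₁Cn : x₁ ∈ Cn k := subset_closure (subset_chainUnion e k hxV')
  have hd0 : d x₁ (Cn k) = 0 := dzero _ (hCnreg k) _ hx₁Cn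
  have hfx₁ : f x₁ ≤ 0 := hd0 ▸ hfle x₁ k
  have : c / 2 < f x₁ := hx₁O
  linarith
end

section
/- Let X be a topological space with base 𝓑 and π-capacity ξ₀ on X. On the hyperspace exp X with the Vietoris base 𝓑_exp of sets [U₁,…,U_k] (U_i ∈ 𝓑), define ξ(F,[U₁,…,U_k]) = (1/k)·min{ inf_{x∈F} max_i ξ₀(x,U_i), min_i sup_{x∈F} ξ₀(x,U_i) }. Then ξ satisfies condition E2: for every basic set [U₁,…,U_k] there is a dense subset D ⊆ [U₁,…,U_k] with ξ(F,[U₁,…,U_k]) > 0 for all F ∈ D; moreover D can be taken to consist of finite sets. -/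
/-- The hyperspace of nonempty compact subsets of `X`. -/
def Exp (X : Type*) [TopologicalSpace X] := {F : Set X // F.Nonempty ∧ IsCompact F}

/-- The Vietoris topology on `Exp X`. -/
instance Exp.topologicalSpace (X : Type*) [TopologicalSpace X] : TopologicalSpace (Exp X) :=
  TopologicalSpace.generateFrom
    ({S | ∃ U : Set X, IsOpen U ∧ S = {F : Exp X | F.1 ⊆ U}} ∪
     {S | ∃ U : Set X, IsOpen U ∧ S = {F : Exp X | (F.1 ∩ U).Nonempty}})

/-- The basic Vietoris set `[U₁, …, U_k]`. -/
def vbox {X : Type*} [TopologicalSpace X] {k : ℕ} (U : Fin k → Set X) : Set (Exp X) :=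
  {F : Exp X | F.1 ⊆ ⋃ i, U i ∧ ∀ i, (F.1 ∩ U i).Nonempty}

/-- A singleton as an element of `Exp X`. -/
def Exp.single {X : Type*} [TopologicalSpace X] (x : X) : Exp X :=
  ⟨{x}, Set.singleton_nonempty x, isCompact_singleton⟩

theorem stmt18 {X : Type*} [TopologicalSpace X] (𝓑 : Set (Set X))
    (hbase : TopologicalSpace.IsTopologicalBasis 𝓑)
    (ξ₀ : X → Set X → ℝ)
    (hrange : ∀ x, ∀ U ∈ 𝓑, 0 ≤ ξ₀ x U ∧ ξ₀ x U ≤ 1)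
    (hE1 : ∀ x, ∀ U ∈ 𝓑, x ∉ U → ξ₀ x U = 0)
    (hE2 : ∀ U ∈ 𝓑, U ⊆ closure {x ∈ U | 0 < ξ₀ x U})
    (hE3 : ∀ U ∈ 𝓑, LowerSemicontinuous (fun x => ξ₀ x U))
    (k : ℕ) (hk : 0 < k) (U : Fin k → Set X) (hU : ∀ i, U i ∈ 𝓑)
    (ξ : Exp X → ℝ)
    (hξ : ∀ F : Exp X, ξ F = (1 / (k : ℝ)) *
      min (sInf {r : ℝ | ∃ x ∈ F.1, r = ⨆ i, ξ₀ x (U i)})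
          (⨅ i, sSup {r : ℝ | ∃ x ∈ F.1, r = ξ₀ x (U i)})) :
    ∃ D : Set (Exp X), D ⊆ vbox U ∧ (∀ F ∈ D, F.1.Finite) ∧
      vbox U ⊆ closure D ∧ ∀ F ∈ D, 0 < ξ F := by
  classical
  haveI : Nonempty (Fin k) := ⟨⟨0, hk⟩⟩
  set V : Fin k → Set X := fun i => {x ∈ U i | 0 < ξ₀ x (U i)} with hV
  have hVU : ∀ i, V i ⊆ U i := fun i x hx => hx.1
  set D : Set (Exp X) :=
    {F : Exp X | F.1.Finite ∧ F.1 ⊆ ⋃ i, V i ∧ ∀ i, (F.1 ∩ V i).Nonempty} with hD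
  have hDsub : D ⊆ vbox U := by
    rintro F ⟨hfin, hsub, hmeet⟩
    refine ⟨hsub.trans (Set.iUnion_mono hVU), fun i => ?_⟩
    obtain ⟨x, hx1, hx2⟩ := hmeet i
    exact ⟨x, hx1, hVU i hx2⟩
  refine ⟨D, hDsub, fun F hF => hF.1, ?_, ?_⟩
  · -- density
    intro F hF
    have hbasis := TopologicalSpace.isTopologicalBasis_of_subbasis
      (rfl : Exp.topologicalSpace X = TopologicalSpace.generateFrom _)
    rw [hbasis.mem_closure_iff]
    rintro o ⟨f, ⟨hffin, hfsub⟩, rfl⟩ hFo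
    simp only [Set.mem_sInter] at hFo
    have z0ne : ∃ x : X, True := ⟨(hF.2 ⟨0, hk⟩).choose, trivial⟩
    -- the "subset" witnesses and the "hit" witnesses
    set A : Set (Set X) := {w | IsOpen w ∧ {G : Exp X | G.1 ⊆ w} ∈ f} with hA
    set B : Set (Set X) := {w | IsOpen w ∧ {G : Exp X | (G.1 ∩ w).Nonempty} ∈ f} with hB
    have hAfin : A.Finite := by
      apply Set.Finite.of_finite_image (f := fun w => {G : Exp X | G.1 ⊆ w})
      · exact hffin.subset (by rintro _ ⟨w, ⟨_, hw⟩, rfl⟩; exact hw)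
      · intro w₁ hw₁ w₂ hw₂ he
        have he' : {G : Exp X | G.1 ⊆ w₁} = {G : Exp X | G.1 ⊆ w₂} := he
        ext x
        constructor <;> intro hx
        · have : Exp.single x ∈ {G : Exp X | G.1 ⊆ w₂} := by
            rw [← he']; exact Set.singleton_subset_iff.mpr hx
          exact this (Set.mem_singleton x)
        · have : Exp.single x ∈ {G : Exp X | G.1 ⊆ w₁} := by
            rw [he']; exact Set.singleton_subset_iff.mpr hx
          exact this (Set.mem_singleton x)
    have hBfin : B.Finite := by
      apply Set.Finite.of_finite_image (f := fun w => {G : Exp X | (G.1 ∩ w).Nonempty})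
      · exact hffin.subset (by rintro _ ⟨w, ⟨_, hw⟩, rfl⟩; exact hw)
      · intro w₁ hw₁ w₂ hw₂ he
        have he' : {G : Exp X | (G.1 ∩ w₁).Nonempty} = {G : Exp X | (G.1 ∩ w₂).Nonempty} := he
        ext x
        constructor <;> intro hx
        · have : Exp.single x ∈ {G : Exp X | (G.1 ∩ w₂).Nonempty} := by
            rw [← he']; exact ⟨x, Set.mem_singleton x, hx⟩
          obtain ⟨y, hy1, hy2⟩ := this
          rwa [← Set.mem_singleton_iff.mp hy1]
        · have : Exp.single x ∈ {G : Exp X | (G.1 ∩ w₁).Nonempty} := by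
            rw [he']; exact ⟨x, Set.mem_singleton x, hx⟩
          obtain ⟨y, hy1, hy2⟩ := this
          rwa [← Set.mem_singleton_iff.mp hy1]
    set W : Set X := ⋂₀ A with hW
    have hWopen : IsOpen W := hAfin.isOpen_sInter (fun w hw => hw.1)
    have hFW : F.1 ⊆ W := by
      intro x hx
      refine Set.mem_sInter.mpr fun w hw => ?_
      exact hFo _ hw.2 hx
    -- choose hitting points for each o ∈ B
    have hyo : ∀ o : Set X, ∃ y, o ∈ B → (y ∈ W ∧ y ∈ o ∧ ∃ i, y ∈ V i) := by
      intro o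
      by_cases ho : o ∈ B
      case neg => exact ⟨z0ne.choose, fun h => absurd h ho⟩
      have : F ∈ {G : Exp X | (G.1 ∩ o).Nonempty} := hFo _ ho.2
      obtain ⟨x, hxF, hxo⟩ := this
      obtain ⟨i, hxi⟩ := Set.mem_iUnion.mp (hF.1 hxF)
      have hxcl : x ∈ closure (V i) := hE2 (U i) (hU i) hxi
      have hop : IsOpen (W ∩ o) := hWopen.inter ho.1
      have hxWo : x ∈ W ∩ o := ⟨hFW hxF, hxo⟩
      obtain ⟨y, hy1, hy2⟩ := (mem_closure_iff.mp hxcl) _ hop hxWo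
      exact ⟨y, fun _ => ⟨hy1.1, hy1.2, i, hy2⟩⟩
    choose y hy using hyo
    -- choose points of W ∩ V i for each i
    have hwi : ∀ i : Fin k, ∃ z, z ∈ W ∧ z ∈ V i := by
      intro i
      obtain ⟨x, hxF, hxi⟩ := hF.2 i
      have hxcl : x ∈ closure (V i) := hE2 (U i) (hU i) hxi
      obtain ⟨z, hz1, hz2⟩ := (mem_closure_iff.mp hxcl) _ hWopen (hFW hxF)
      exact ⟨z, hz1, hz2⟩
    choose z hzW hzV using hwi
    -- build G
    set Gs : Set X := (y '' B) ∪ Set.range z with hGs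
    have hGfin : Gs.Finite := (hBfin.image y).union (Set.finite_range z)
    have hGne : Gs.Nonempty := ⟨z ⟨0, hk⟩, Set.mem_union_right _ ⟨⟨0, hk⟩, rfl⟩⟩
    set G : Exp X := ⟨Gs, hGne, hGfin.isCompact⟩ with hG
    have hGW : Gs ⊆ W := by
      rintro x (⟨o, ho, rfl⟩ | ⟨i, rfl⟩)
      · exact ((hy o) ho).1
      · exact hzW i
    have hGD : G ∈ D := by
      refine ⟨hGfin, ?_, fun i => ⟨z i, Set.mem_union_right _ ⟨i, rfl⟩, hzV i⟩⟩
      rintro x (⟨o, ho, rfl⟩ | ⟨i, rfl⟩)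
      · obtain ⟨i, hi⟩ := ((hy o) ho).2.2
        exact Set.mem_iUnion.mpr ⟨i, hi⟩
      · exact Set.mem_iUnion.mpr ⟨i, hzV i⟩
    refine ⟨G, Set.mem_sInter.mpr fun t ht => ?_, hGD⟩
    rcases hfsub ht with ⟨w, hwopen, rfl⟩ | ⟨w, hwopen, rfl⟩
    · intro x hx
      exact Set.mem_sInter.mp (hGW hx) w ⟨hwopen, ht⟩
    · exact ⟨y w, Set.mem_union_left _ ⟨w, ⟨hwopen, ht⟩, rfl⟩, ((hy w) ⟨hwopen, ht⟩).2.1⟩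
  · -- positivity
    rintro F ⟨hfin, hsub, hmeet⟩
    rw [hξ F]
    have hk' : (0 : ℝ) < 1 / (k : ℝ) := by positivity
    refine mul_pos hk' (lt_min ?_ ?_)
    · -- sInf part
      have hset : {r : ℝ | ∃ x ∈ F.1, r = ⨆ i, ξ₀ x (U i)}
          = (fun x => ⨆ i, ξ₀ x (U i)) '' F.1 := by
        ext r; constructor
        · rintro ⟨x, hx, rfl⟩; exact ⟨x, hx, rfl⟩
        · rintro ⟨x, hx, rfl⟩; exact ⟨x, hx, rfl⟩
      rw [hset]
      have hne : ((fun x => ⨆ i, ξ₀ x (U i)) '' F.1).Nonempty := F.2.1.image _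
      have hfin' : ((fun x => ⨆ i, ξ₀ x (U i)) '' F.1).Finite := hfin.image _
      obtain ⟨x, hx, heq⟩ := hne.csInf_mem hfin'
      rw [← heq]
      obtain ⟨i, hxi⟩ := Set.mem_iUnion.mp (hsub hx)
      calc (0 : ℝ) < ξ₀ x (U i) := hxi.2
        _ ≤ ⨆ j, ξ₀ x (U j) :=
            le_ciSup (f := fun j => ξ₀ x (U j)) (Set.Finite.bddAbove (Set.finite_range _)) i
    · -- iInf part
      have hpos : ∀ i, 0 < sSup {r : ℝ | ∃ x ∈ F.1, r = ξ₀ x (U i)} := by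
        intro i
        obtain ⟨x, hxF, hxV⟩ := hmeet i
        have hmem : ξ₀ x (U i) ∈ {r : ℝ | ∃ x ∈ F.1, r = ξ₀ x (U i)} := ⟨x, hxF, rfl⟩
        have hbdd : BddAbove {r : ℝ | ∃ x ∈ F.1, r = ξ₀ x (U i)} := by
          have : {r : ℝ | ∃ x ∈ F.1, r = ξ₀ x (U i)} = (fun x => ξ₀ x (U i)) '' F.1 := by
            ext r; constructor
            · rintro ⟨x, hx, rfl⟩; exact ⟨x, hx, rfl⟩
            · rintro ⟨x, hx, rfl⟩; exact ⟨x, hx, rfl⟩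
          rw [this]
          exact Set.Finite.bddAbove (hfin.image _)
        exact lt_of_lt_of_le hxV.2 (le_csSup hbdd hmem)
      obtain ⟨i, hi⟩ := exists_eq_ciInf_of_finite
        (f := fun i => sSup {r : ℝ | ∃ x ∈ F.1, r = ξ₀ x (U i)})
      rw [← hi]
      exact hpos i
end
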